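/- arXiv:2408.02830 — 2 statements merged into one kernel-verified Lean document; each statement's English description precedes it below -/
import Mathlib

section
/- For ρ ∈ (0,1) and positive integers T₀, T, the pre-post variance ratio g(T) = (1/T + ρ(T-1)/T)·(1 − λ(T)²), with λ(T) = 1/(√(1+(1-ρ)/(ρT₀))·√(1+(1-ρ)/(ρT))), converges as T → ∞ to ρ·(1 − 1/(1+(1-ρ)/(ρT₀))) = ρ(1-ρ)/(ρT₀ + 1 - ρ), which is strictly positive. -/
open Filter Topology

/-!
As `T → ∞` the variance factor `1/T + ρ(T-1)/T = ρ + (1-ρ)/T` tends to `ρ`, while the second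
square root in `λ(T)` tends to `1`, so `λ(T)² → 1/(1 + (1-ρ)/(ρT₀)) < 1`. The product of the
limits is `ρ(1-ρ)/(ρT₀ + 1 - ρ)`.
-/

lemma tendsto_one_div_add_mul_sub_one_div_nat (ρ : ℝ) :
    Tendsto (fun T : ℕ => 1 / (T : ℝ) + ρ * (T - 1) / T) atTop (𝓝 ρ) := by
  have h : Tendsto (fun T : ℕ => ρ + (1 - ρ) / (T : ℝ)) atTop (𝓝 (ρ + 0)) :=
    tendsto_const_nhds.add (tendsto_const_div_atTop_nhds_zero_nat (1 - ρ))
  rw [add_zero] at h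
  refine h.congr' ?_
  filter_upwards [eventually_ne_atTop 0] with T hT
  field_simp
  ring

lemma tendsto_one_add_div_mul_nat (κ ρ : ℝ) :
    Tendsto (fun T : ℕ => 1 + κ / (ρ * T)) atTop (𝓝 1) := by
  simpa only [← div_div, add_zero] using
    (tendsto_const_div_atTop_nhds_zero_nat (κ / ρ)).const_add 1

lemma mul_one_sub_one_div_one_add_div {ρ t : ℝ} (hρ : ρ ≠ 0) (ht : t ≠ 0)
    (hden : ρ * t + 1 - ρ ≠ 0) :
    ρ * (1 - 1 / (1 + (1 - ρ) / (ρ * t))) = ρ * (1 - ρ) / (ρ * t + 1 - ρ) := by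
  have hsum : ρ * t + (1 - ρ) ≠ 0 := by rwa [← add_sub_assoc]
  field_simp
  ring

theorem stmt_12 (ρ : ℝ) (hρ0 : 0 < ρ) (hρ1 : ρ < 1) (T₀ : ℕ) (hT₀ : 1 ≤ T₀) :
    Filter.Tendsto
      (fun T : ℕ => (1 / (T : ℝ) + ρ * (T - 1) / T) *
        (1 - (1 / (Real.sqrt (1 + (1 - ρ) / (ρ * T₀)) * Real.sqrt (1 + (1 - ρ) / (ρ * T)))) ^ 2))
      Filter.atTop (nhds (ρ * (1 - ρ) / (ρ * T₀ + 1 - ρ))) ∧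
    ρ * (1 - 1 / (1 + (1 - ρ) / (ρ * T₀))) = ρ * (1 - ρ) / (ρ * T₀ + 1 - ρ) ∧
    0 < ρ * (1 - ρ) / (ρ * T₀ + 1 - ρ) := by
  have hT₀pos : (0 : ℝ) < T₀ := by exact_mod_cast hT₀
  have hden : 0 < ρ * T₀ + 1 - ρ := by nlinarith
  have hlim := mul_one_sub_one_div_one_add_div hρ0.ne' hT₀pos.ne' hden.ne'
  refine ⟨?_, hlim, div_pos (mul_pos hρ0 (sub_pos.2 hρ1)) hden⟩
  set a := 1 + (1 - ρ) / (ρ * T₀)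
  have ha : 0 < a := by positivity
  have hcorr : Tendsto (fun T : ℕ => 1 - (1 / (√a * √(1 + (1 - ρ) / (ρ * T)))) ^ 2) atTop
      (𝓝 (1 - (1 / (√a * √1)) ^ 2)) :=
    ((tendsto_const_nhds.div (tendsto_const_nhds.mul (tendsto_one_add_div_mul_nat _ ρ).sqrt)
      (by positivity)).pow 2).const_sub 1
  rw [Real.sqrt_one, mul_one, div_pow, one_pow, Real.sq_sqrt ha.le] at hcorr
  exact hlim ▸ (tendsto_one_div_add_mul_sub_one_div_nat ρ).mul hcorr
end

section
/- For ρ ∈ (0,1) and positive integers T₀, T, there exists a threshold T* such that for all T ≥ T*, (1/T + ρ(T-1)/T)·(1 − λ(T)²) > 1/T, where λ(T) = 1/(√(1+(1-ρ)/(ρT₀))·√(1+(1-ρ)/(ρT))). That is, for sufficiently long durations, the user-day experiment variance 1/T is smaller than the pre-post adjusted user experiment variance. -/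
theorem stmt_13 (ρ : ℝ) (hρ0 : 0 < ρ) (hρ1 : ρ < 1) (T₀ : ℕ) (hT₀ : 1 ≤ T₀) :
    ∃ Tstar : ℕ, ∀ T : ℕ, Tstar ≤ T →
      1 / (T : ℝ) < (1 / (T : ℝ) + ρ * (T - 1) / T) *
        (1 - (1 / (Real.sqrt (1 + (1 - ρ) / (ρ * T₀)) * Real.sqrt (1 + (1 - ρ) / (ρ * T)))) ^ 2) := by
  have hT₀pos : (0:ℝ) < T₀ := by exact_mod_cast hT₀
  set a : ℝ := (1 - ρ) / (ρ * T₀) with ha_def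
  have ha : 0 < a := div_pos (by linarith) (by positivity)
  have hρa : 0 < ρ * a := mul_pos hρ0 ha
  refine ⟨⌈1 + 1/(ρ*a)⌉₊ + 1, fun T hT => ?_⟩
  have hTge : 1 + 1/(ρ*a) < (T:ℝ) := by
    have h1 : 1 + 1/(ρ*a) ≤ (⌈1 + 1/(ρ*a)⌉₊ : ℝ) := Nat.le_ceil _
    have h2 : ((⌈1 + 1/(ρ*a)⌉₊ + 1 : ℕ) : ℝ) ≤ (T:ℝ) := by exact_mod_cast hT
    push_cast at h2
    linarith
  have hTpos : (0:ℝ) < T := by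
    have : (0:ℝ) < 1 + 1/(ρ*a) := by positivity
    linarith
  set B : ℝ := 1 + (1 - ρ) / (ρ * T) with hB_def
  have hB : (1:ℝ) ≤ B := by
    have : 0 ≤ (1-ρ)/(ρ*T) := div_nonneg (by linarith) (by positivity)
    simp [hB_def]; linarith
  have hApos : (0:ℝ) < 1 + a := by linarith
  have hBpos : (0:ℝ) < B := by linarith
  have hsq : (1 / (Real.sqrt (1+a) * Real.sqrt B))^2 = 1 / ((1+a)*B) := by
    rw [div_pow, one_pow, mul_pow, Real.sq_sqrt hApos.le, Real.sq_sqrt hBpos.le]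
  rw [hsq]
  have h1 : 1/((1+a)*B) ≤ 1/(1+a) := by
    apply one_div_le_one_div_of_le hApos
    nlinarith
  have h2 : a/(1+a) ≤ 1 - 1/((1+a)*B) := by
    have he : 1 - 1/(1+a) = a/(1+a) := by field_simp; ring
    linarith
  have hinv : ρ*a*(1/(ρ*a)) = 1 := mul_one_div_cancel (ne_of_gt hρa)
  have hstep : (1+a) < (1+ρ*((T:ℝ)-1))*a := by nlinarith
  have hf1pos : (0:ℝ) < (1+ρ*((T:ℝ)-1))/T := by
    apply div_pos _ hTpos
    nlinarith
  have key : 1/(T:ℝ) < ((1+ρ*((T:ℝ)-1))/T) * (a/(1+a)) := by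
    rw [div_mul_div_comm, div_lt_div_iff₀ hTpos (by positivity)]
    nlinarith
  have final : ((1+ρ*((T:ℝ)-1))/T) * (a/(1+a)) ≤
      ((1+ρ*((T:ℝ)-1))/T) * (1 - 1/((1+a)*B)) :=
    mul_le_mul_of_nonneg_left h2 hf1pos.le
  have heq : 1/(T:ℝ) + ρ*((T:ℝ)-1)/T = (1+ρ*((T:ℝ)-1))/T := by ring
  rw [heq]
  linarith
end
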